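/- Let θ > 0, α > 2, β₀, β₁, τ ∈ ℝ and δ ≥ 0. Set ν_τ = (β₀ + β₁τ)θ/(α−1) − β₁θ²/((α−1)(α−2)) and assume ν_τ ≠ 0 and (β₀ + β₁τ)(2−α) + β₁θ ≠ 0. Then (1/ν_τ) · ∫_0^∞ (β₀ + β₁(τ − u)) · θ^α (δ + u + θ)^{−α} du = θ^{α−1}(δ+θ)^{1−α} · (1 + β₁δ/((β₀ + β₁τ)(2−α) + β₁θ)). -/

import Mathlib

open MeasureTheory Set Filter Topology

/-! Splitting the affine factor as `p + q u = (p - q s) + q (u + s)` reduces the integral to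
`∫_0^∞ (u + s)^a du = -s^(a+1) / (a+1)` for `a = -α` and `a = 1 - α`. The rest is algebra: with
`D = (β₀ + β₁τ)(2-α) + β₁θ` one has `ν_τ = -θ D / ((α-1)(α-2))`, while the integral equals
`-θ^α (δ+θ)^(1-α) (D + β₁δ) / ((α-1)(α-2))`. -/

theorem integral_Ioi_add_rpow_of_lt {a c m : ℝ} (ha : a < -1) (hc : -m < c) :
    ∫ x in Ioi c, (x + m) ^ a = -(c + m) ^ (a + 1) / (a + 1) := by
  have hd : ∀ x ∈ Ici c, HasDerivAt (fun t ↦ (t + m) ^ (a + 1) / (a + 1)) ((x + m) ^ a) x := by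
    intro x hx
    have hxm : 0 < x + m := by linarith [mem_Ici.mp hx]
    refine ((((hasDerivAt_id' x).add_const m).rpow_const (p := a + 1)
      (Or.inl hxm.ne')).div_const (a + 1)).congr_deriv ?_
    rw [add_sub_cancel_right]
    field_simp [show a + 1 ≠ 0 by linarith]
  have ht : Tendsto (fun t ↦ (t + m) ^ (a + 1) / (a + 1)) atTop (𝓝 (0 / (a + 1))) := by
    rw [← neg_neg (a + 1)]
    exact (tendsto_rpow_neg_atTop (by linarith)).comp
      (tendsto_atTop_add_const_right _ m tendsto_id) |>.div_const _
  rw [integral_Ioi_of_hasDerivAt_of_tendsto' hd (integrableOn_add_rpow_Ioi_of_lt ha hc) ht]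
  ring

theorem integral_Ioi_affine_mul_add_rpow_neg (p q : ℝ) {s α : ℝ} (hs : 0 < s) (hα : 2 < α) :
    ∫ u in Ioi (0 : ℝ), (p + q * u) * (u + s) ^ (-α)
      = s ^ (1 - α) * ((p - q * s) / (α - 1) + q * s / (α - 2)) := by
  have hs' : -s < 0 := by linarith
  have h₀ := integrableOn_add_rpow_Ioi_of_lt (show -α < -1 by linarith) hs'
  have h₁ := integrableOn_add_rpow_Ioi_of_lt (show -α + 1 < -1 by linarith) hs'
  have hsplit : ∀ u ∈ Ioi (0 : ℝ), (p + q * u) * (u + s) ^ (-α)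
      = (p - q * s) * (u + s) ^ (-α) + q * (u + s) ^ (-α + 1) := by
    intro u hu
    rw [Real.rpow_add_one (by linarith [mem_Ioi.mp hu])]
    ring
  rw [setIntegral_congr_fun measurableSet_Ioi hsplit,
    integral_add (h₀.const_mul _) (h₁.const_mul _), integral_const_mul, integral_const_mul,
    integral_Ioi_add_rpow_of_lt (by linarith) hs', integral_Ioi_add_rpow_of_lt (by linarith) hs',
    zero_add, show -α + 1 = 1 - α by ring, Real.rpow_add_one hs.ne' (1 - α)]
  field_simp [show α - 1 ≠ 0 by linarith, show α - 2 ≠ 0 by linarith,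
    show 1 - α ≠ 0 by linarith, show 1 - α + 1 ≠ 0 by linarith]
  ring

theorem stmt_17_general
    (θ α β₀ β₁ τ δ : ℝ) (hθ : 0 < θ) (hα : 2 < α) (hδ : 0 ≤ δ)
    (ντ : ℝ)
    (hντ : ντ = (β₀ + β₁ * τ) * θ / (α - 1) - β₁ * θ ^ 2 / ((α - 1) * (α - 2)))
    (hden : (β₀ + β₁ * τ) * (2 - α) + β₁ * θ ≠ 0) :
    (1 / ντ) * ∫ u in Set.Ioi (0 : ℝ),
        (β₀ + β₁ * (τ - u)) * (θ ^ α * (δ + u + θ) ^ (-α))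
      = θ ^ (α - 1) * (δ + θ) ^ (1 - α)
          * (1 + β₁ * δ / ((β₀ + β₁ * τ) * (2 - α) + β₁ * θ)) := by
  have hintegrand : ∀ u : ℝ, (β₀ + β₁ * (τ - u)) * (θ ^ α * (δ + u + θ) ^ (-α))
      = θ ^ α * ((β₀ + β₁ * τ + -β₁ * u) * (u + (δ + θ)) ^ (-α)) := fun u ↦ by
    rw [show δ + u + θ = u + (δ + θ) by ring]
    ring
  simp_rw [hintegrand]
  set D := (β₀ + β₁ * τ) * (2 - α) + β₁ * θ with hD
  have hν : ντ = -θ * D / ((α - 1) * (α - 2)) := by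
    rw [hντ, hD]
    field_simp [show α - 1 ≠ 0 by linarith, show α - 2 ≠ 0 by linarith]
    ring
  rw [integral_const_mul, integral_Ioi_affine_mul_add_rpow_neg _ _ (by positivity) hα,
    show θ ^ α = θ ^ (α - 1) * θ by rw [← Real.rpow_add_one hθ.ne']; ring_nf, hν]
  field_simp [show α - 1 ≠ 0 by linarith, show α - 2 ≠ 0 by linarith, hθ.ne', hden]
  rw [hD]
  ring

/-- For `θ > 0`, `α > 2`, reals `β₀, β₁, τ` and `δ ≥ 0`, with
`ν_τ = (β₀ + β₁τ)θ/(α-1) - β₁θ²/((α-1)(α-2)) ≠ 0` and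
`(β₀ + β₁τ)(2-α) + β₁θ ≠ 0`:
`(1/ν_τ) ∫_0^∞ (β₀ + β₁(τ - u)) θ^α (δ + u + θ)^(-α) du
  = θ^(α-1)(δ+θ)^(1-α) (1 + β₁δ/((β₀ + β₁τ)(2-α) + β₁θ))`. -/
theorem stmt_17
    (θ α β₀ β₁ τ δ : ℝ) (hθ : 0 < θ) (hα : 2 < α) (hδ : 0 ≤ δ)
    (ντ : ℝ)
    (hντ : ντ = (β₀ + β₁ * τ) * θ / (α - 1) - β₁ * θ ^ 2 / ((α - 1) * (α - 2)))
    (hντ_ne : ντ ≠ 0)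
    (hden : (β₀ + β₁ * τ) * (2 - α) + β₁ * θ ≠ 0) :
    (1 / ντ) * ∫ u in Set.Ioi (0 : ℝ),
        (β₀ + β₁ * (τ - u)) * (θ ^ α * (δ + u + θ) ^ (-α))
      = θ ^ (α - 1) * (δ + θ) ^ (1 - α)
          * (1 + β₁ * δ / ((β₀ + β₁ * τ) * (2 - α) + β₁ * θ)) :=
  stmt_17_general θ α β₀ β₁ τ δ hθ hα hδ ντ hντ hden
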